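/- arXiv:math/0309347 — 5 statements merged into one kernel-verified Lean document; each statement's English description precedes it below -/
import Mathlib

section
/- A connected directed graph admits a dual nowhere-zero p-flow (a map from arcs to Z_p \ {0} whose signed sum around every circuit is zero) if and only if the underlying undirected graph is p-colorable (there is a proper vertex coloring with p colors). -/
/-- A dual `p`-flow on a digraph given by `tl, hd : E → V`: a map `φ : E → ZMod p`
whose signed sum along every closed walk (hence every circuit) vanishes. -/
def IsDualFlow {V E : Type} (p : ℕ) (tl hd : E → V) (φ : E → ZMod p) : Prop :=
  ∀ (n : ℕ) (v : Fin (n + 1) → V) (e : Fin n → E) (σ : Fin n → Bool),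
    v 0 = v (Fin.last n) →
    (∀ i : Fin n,
      (σ i = true → tl (e i) = v i.castSucc ∧ hd (e i) = v i.succ) ∧
      (σ i = false → hd (e i) = v i.castSucc ∧ tl (e i) = v i.succ)) →
    (∑ i : Fin n, if σ i then φ (e i) else -φ (e i)) = 0

/-- The underlying undirected graph of the digraph is connected. -/
def DigraphConnected {V E : Type} (tl hd : E → V) : Prop :=
  ∀ u w : V, Relation.ReflTransGen
    (fun a b => ∃ e : E, (tl e = a ∧ hd e = b) ∨ (tl e = b ∧ hd e = a)) u w

/-!
A dual flow on a connected digraph is exactly the coboundary `φ (u → v) = ω v - ω u` of a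
potential `ω : V → ZMod p`: integrate `φ` along walks from a base vertex, which is well defined
because `φ` sums to zero around closed walks. Such a `φ` is nowhere zero iff `ω` is a proper
colouring.
-/

theorem Fin.sum_succ_sub_castSucc {M : Type*} [AddCommGroup M] {n : ℕ} (g : Fin (n + 1) → M) :
    ∑ i : Fin n, (g i.succ - g i.castSucc) = g (Fin.last n) - g 0 := by
  have h := (Fin.sum_univ_succ g).symm.trans (Fin.sum_univ_castSucc g)
  rw [Finset.sum_sub_distrib, sub_eq_sub_iff_add_eq_add, add_comm, h, add_comm]

theorem Relation.ReflTransGen.exists_fin_chain {α : Type*} {r : α → α → Prop} {a b : α}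
    (h : Relation.ReflTransGen r a b) :
    ∃ (n : ℕ) (c : Fin (n + 1) → α), c 0 = a ∧ c (Fin.last n) = b ∧
      ∀ i : Fin n, r (c i.castSucc) (c i.succ) := by
  induction h using Relation.ReflTransGen.head_induction_on with
  | refl => exact ⟨0, fun _ => b, rfl, rfl, finZeroElim⟩
  | head hac _ ih =>
    obtain ⟨n, c, hc0, hcl, hc⟩ := ih
    refine ⟨n + 1, Fin.cons _ c, rfl, by rw [← Fin.succ_last, Fin.cons_succ, hcl], ?_⟩
    intro i
    cases i using Fin.cases with
    | zero => simpa [hc0] using hac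
    | succ j => simpa [← Fin.succ_castSucc] using hc j

theorem isDualFlow_sub {V E : Type} (p : ℕ) (tl hd : E → V) (ω : V → ZMod p) :
    IsDualFlow p tl hd (fun e => ω (hd e) - ω (tl e)) := by
  intro n v e σ hclosed hwalk
  have hterm : ∀ i : Fin n, (if σ i then ω (hd (e i)) - ω (tl (e i))
      else -(ω (hd (e i)) - ω (tl (e i)))) = ω (v i.succ) - ω (v i.castSucc) := by
    intro i
    cases hσ : σ i
    · obtain ⟨hhd, htl⟩ := (hwalk i).2 hσ
      simp [hhd, htl]
    · obtain ⟨htl, hhd⟩ := (hwalk i).1 hσ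
      simp [hhd, htl]
  rw [Finset.sum_congr rfl fun i _ => hterm i, Fin.sum_succ_sub_castSucc fun i => ω (v i),
    hclosed, sub_self]

section Potential

variable {V E : Type} {p : ℕ} {tl hd : E → V} {φ : E → ZMod p}

/-- Walk steps on `V × ZMod p` whose second coordinate integrates `φ`: traversing `e` forwards
(`σ = true`) adds `φ e`, backwards subtracts it. -/
def PotentialStep (tl hd : E → V) (φ : E → ZMod p) (a b : V × ZMod p) : Prop :=
  ∃ (e : E) (σ : Bool),
    (if σ then tl e = a.1 ∧ hd e = b.1 else hd e = a.1 ∧ tl e = b.1) ∧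
    b.2 = a.2 + if σ then φ e else -φ e

instance : Std.Symm (PotentialStep tl hd φ) where
  symm := by
    rintro a b ⟨e, σ, harc, hval⟩
    refine ⟨e, !σ, ?_, ?_⟩
    · cases σ <;> simpa [and_comm] using harc
    · cases σ <;> simp [hval]

theorem DigraphConnected.exists_reflTransGen_potentialStep (hconn : DigraphConnected tl hd)
    (u w : V) (x : ZMod p) :
    ∃ y, Relation.ReflTransGen (PotentialStep tl hd φ) (u, x) (w, y) := by
  induction hconn u w with
  | refl => exact ⟨x, .refl⟩
  | tail _ hbc ih =>
    obtain ⟨y, hy⟩ := ih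
    obtain ⟨e, ⟨htl, hhd⟩ | ⟨htl, hhd⟩⟩ := hbc
    · exact ⟨_, hy.tail ⟨e, true, ⟨htl, hhd⟩, rfl⟩⟩
    · exact ⟨_, hy.tail ⟨e, false, ⟨hhd, htl⟩, rfl⟩⟩

theorem IsDualFlow.eq_of_reflTransGen_potentialStep (hφ : IsDualFlow p tl hd φ) {a : V}
    {x y : ZMod p} (h : Relation.ReflTransGen (PotentialStep tl hd φ) (a, x) (a, y)) :
    x = y := by
  obtain ⟨n, c, hc0, hcl, hc⟩ := h.exists_fin_chain
  choose e σ harc hval using hc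
  have hwalk : ∀ i, (σ i = true → tl (e i) = (c i.castSucc).1 ∧ hd (e i) = (c i.succ).1) ∧
      (σ i = false → hd (e i) = (c i.castSucc).1 ∧ tl (e i) = (c i.succ).1) :=
    fun i => ⟨fun hσ => by simpa [hσ] using harc i, fun hσ => by simpa [hσ] using harc i⟩
  have hsum := hφ n (fun i => (c i).1) e σ (by simp [hc0, hcl]) hwalk
  have hterm : ∀ i, (if σ i then φ (e i) else -φ (e i)) = (c i.succ).2 - (c i.castSucc).2 :=
    fun i => by rw [hval i, add_sub_cancel_left]
  rw [Finset.sum_congr rfl fun i _ => hterm i, Fin.sum_succ_sub_castSucc fun i => (c i).2,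
    hc0, hcl, sub_eq_zero] at hsum
  exact hsum.symm

theorem IsDualFlow.exists_potential (hconn : DigraphConnected tl hd)
    (hφ : IsDualFlow p tl hd φ) : ∃ ω : V → ZMod p, ∀ e, φ e = ω (hd e) - ω (tl e) := by
  rcases isEmpty_or_nonempty V with hV | ⟨⟨v₀⟩⟩
  · exact ⟨isEmptyElim, fun e => isEmptyElim (tl e)⟩
  choose ω hω using fun w => hconn.exists_reflTransGen_potentialStep (φ := φ) v₀ w 0
  refine ⟨ω, fun e => ?_⟩
  have hreach : Relation.ReflTransGen (PotentialStep tl hd φ) (v₀, 0) (hd e, ω (tl e) + φ e) :=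
    (hω (tl e)).tail ⟨e, true, ⟨rfl, rfl⟩, rfl⟩
  have hpot := hφ.eq_of_reflTransGen_potentialStep
    ((Std.Symm.symm _ _ (hω (hd e))).trans hreach)
  rw [hpot, add_sub_cancel_left]

theorem isDualFlow_iff_exists_potential (hconn : DigraphConnected tl hd) :
    IsDualFlow p tl hd φ ↔ ∃ ω : V → ZMod p, ∀ e, φ e = ω (hd e) - ω (tl e) := by
  refine ⟨fun hφ => hφ.exists_potential hconn, ?_⟩
  rintro ⟨ω, hω⟩
  rw [show φ = fun e => ω (hd e) - ω (tl e) from funext hω]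
  exact isDualFlow_sub p tl hd ω

end Potential

theorem dually_flowing_iff_colorable_general {V E : Type}
    (p : ℕ) (tl hd : E → V) (hconn : DigraphConnected tl hd) :
    (∃ φ : E → ZMod p, (∀ e, φ e ≠ 0) ∧ IsDualFlow p tl hd φ) ↔
    (∃ ω : V → ZMod p, ∀ e : E, ω (tl e) ≠ ω (hd e)) := by
  simp_rw [isDualFlow_iff_exists_potential hconn]
  constructor
  · rintro ⟨φ, hφ0, ω, hω⟩
    exact ⟨ω, fun e he => hφ0 e (by rw [hω, he, sub_self])⟩
  · rintro ⟨ω, hω⟩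
    exact ⟨_, fun e => sub_ne_zero.2 (hω e).symm, ω, fun _ => rfl⟩

theorem dually_flowing_iff_colorable {V E : Type} [Fintype V] [Fintype E]
    (p : ℕ) (hp : 2 ≤ p) (tl hd : E → V) (hconn : DigraphConnected tl hd) :
    (∃ φ : E → ZMod p, (∀ e, φ e ≠ 0) ∧ IsDualFlow p tl hd φ) ↔
    (∃ ω : V → ZMod p, ∀ e : E, ω (tl e) ≠ ω (hd e)) :=
  dually_flowing_iff_colorable_general p tl hd hconn
end

section
/- A digraph G=(V,E) has a nowhere-zero p-flow if and only if the flow polynomial f_G^p does not belong to the ideal I_E^p. -/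
open MvPolynomial Finset

/-- The ideal `I_E^p` generated by `1 + x_e + ⋯ + x_e^{p-1}` for each `e ∈ E`. -/
noncomputable def flowIdeal (E : Type) (p : ℕ) : Ideal (MvPolynomial E ℂ) :=
  Ideal.span (Set.range fun e : E => ∑ i ∈ Finset.range p, (X e : MvPolynomial E ℂ) ^ i)

/-- The flow polynomial `f_G^p` of a digraph given by `tl, hd : E → V`. -/
noncomputable def flowPoly {V E : Type} [Fintype V] [Fintype E] [DecidableEq V]
    (p : ℕ) (tl hd : E → V) : MvPolynomial E ℂ :=
  ∏ v : V, ∑ i ∈ Finset.range p,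
    ((∏ e ∈ univ.filter (fun e => hd e = v), (X e : MvPolynomial E ℂ)) *
      ∏ e ∈ univ.filter (fun e => tl e = v), (X e : MvPolynomial E ℂ) ^ (p - 1)) ^ i

/-- `φ` is a `p`-flow: flow conservation mod `p` at every vertex. -/
def IsFlow {V E : Type} [Fintype E] [DecidableEq V] (p : ℕ) (tl hd : E → V)
    (φ : E → ZMod p) : Prop :=
  ∀ v : V, (∑ e ∈ univ.filter (fun e => hd e = v), φ e) =
    ∑ e ∈ univ.filter (fun e => tl e = v), φ e

/-!
Over `ℂ` the polynomial `1 + x + ⋯ + x^{p-1}` is `∏ (x - ψ a)` over `a ≠ 0` in `ZMod p`, where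
`ψ a = exp (2πia/p)` is the standard additive character. By Alon's Combinatorial Nullstellensatz,
`I_E^p` is therefore the ideal of polynomials vanishing at every point `x_e = ψ (φ e)` with
`φ : E → ZMod p` nowhere zero. At such a point the factor of `f_G^p` at `v` becomes the geometric
sum `∑_{i<p} ψ(b_v)^i`, where `b_v` is the net inflow of `φ` at `v`; it is nonzero exactly when
`b_v = 0`.
-/

namespace MvPolynomial

theorem mem_span_prod_X_sub_C_iff {R σ : Type*} [CommRing R] [IsDomain R] [Finite σ]
    (S : σ → Finset R) (hS : ∀ i, (S i).Nonempty) (f : MvPolynomial σ R) :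
    f ∈ Ideal.span (Set.range fun i => ∏ s ∈ S i, (X i - C s)) ↔
      ∀ x : σ → R, (∀ i, x i ∈ S i) → eval x f = 0 := by
  refine ⟨fun hf x hx => ?_, fun hf => ?_⟩
  · refine (Ideal.span_le.2 ?_ : _ ≤ RingHom.ker (eval x)) hf
    rintro _ ⟨i, rfl⟩
    simpa [RingHom.mem_ker, map_prod] using prod_eq_zero (hx i) (by simp)
  · obtain ⟨h, -, rfl⟩ := combinatorial_nullstellensatz_exists_linearCombination S hS f hf
    rw [Ideal.span, ← Finsupp.range_linearCombination]
    exact LinearMap.mem_range_self _ h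

end MvPolynomial

namespace AddChar

theorem map_sum_eq_prod {A M ι : Type*} [AddCommMonoid A] [CommMonoid M] (ψ : AddChar A M)
    (s : Finset ι) (f : ι → A) : ψ (∑ i ∈ s, f i) = ∏ i ∈ s, ψ (f i) := by
  classical
  induction s using Finset.induction_on with
  | empty => simp
  | insert i s hi ih => rw [sum_insert hi, prod_insert hi, map_add_eq_mul, ih]

section ZMod

variable {M : Type*} [CommMonoid M] {p : ℕ} (ψ : AddChar (ZMod p) M)

theorem apply_pow_eq_one (a : ZMod p) : ψ a ^ p = 1 := by
  rw [← map_nsmul_eq_pow, nsmul_eq_mul, ZMod.natCast_self, zero_mul, map_zero_eq_one]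

theorem apply_pow_pred_eq_apply_neg [NeZero p] (a : ZMod p) : ψ a ^ (p - 1) = ψ (-a) := by
  rw [← map_nsmul_eq_pow, nsmul_eq_mul, Nat.cast_pred (NeZero.pos p), ZMod.natCast_self,
    zero_sub, neg_one_mul]

end ZMod

variable {K : Type*} [Field K] {p : ℕ} {ψ : AddChar (ZMod p) K}

theorem isPrimitiveRoot_apply_one (hψ : Function.Injective ψ) : IsPrimitiveRoot (ψ 1) p := by
  refine ⟨ψ.apply_pow_eq_one 1, fun k hk => ?_⟩
  rw [← map_nsmul_eq_pow, nsmul_one, ← map_zero_eq_one ψ, hψ.eq_iff] at hk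
  exact (ZMod.natCast_eq_zero_iff k p).1 hk

variable [NeZero p]

theorem image_univ_eq_nthRootsFinset [DecidableEq K] (hψ : Function.Injective ψ) :
    univ.image ψ = Polynomial.nthRootsFinset p (1 : K) := by
  refine eq_of_subset_of_card_le (fun _ hz => ?_) ?_
  · obtain ⟨a, -, rfl⟩ := mem_image.1 hz
    exact (Polynomial.mem_nthRootsFinset (NeZero.pos p) 1).2 (ψ.apply_pow_eq_one a)
  · rw [(isPrimitiveRoot_apply_one hψ).card_nthRootsFinset, card_image_of_injective _ hψ,
      card_univ, ZMod.card]

theorem X_pow_sub_one_eq_prod (hψ : Function.Injective ψ) :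
    (Polynomial.X ^ p - 1 : Polynomial K) = ∏ a, (Polynomial.X - Polynomial.C (ψ a)) := by
  classical
  rw [Polynomial.X_pow_sub_one_eq_prod (NeZero.pos p) (isPrimitiveRoot_apply_one hψ),
    ← image_univ_eq_nthRootsFinset hψ, prod_image hψ.injOn]

theorem geom_sum_X_eq_prod (hψ : Function.Injective ψ) :
    ∑ i ∈ range p, (Polynomial.X : Polynomial K) ^ i =
      ∏ a ∈ univ.erase 0, (Polynomial.X - Polynomial.C (ψ a)) := by
  refine mul_left_cancel₀ (Polynomial.X_sub_C_ne_zero (ψ 0)) ?_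
  rw [mul_prod_erase _ (fun a => Polynomial.X - Polynomial.C (ψ a)) (mem_univ 0),
    ← X_pow_sub_one_eq_prod hψ, map_zero_eq_one, map_one, mul_geom_sum]

end AddChar

theorem geom_sum_ne_zero_iff_eq_one {K : Type*} [Field K] [CharZero K] {p : ℕ} (hp : p ≠ 0)
    {z : K} (hz : z ^ p = 1) : ∑ i ∈ range p, z ^ i ≠ 0 ↔ z = 1 := by
  by_cases h : z = 1
  · simp [h, hp]
  · simp [h, geom_sum_eq h, hz]

theorem eval_prod_X_mul_prod_X_pow_pred {R E : Type*} [CommRing R] {p : ℕ} [NeZero p]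
    (ψ : AddChar (ZMod p) R) (φ : E → ZMod p) (A B : Finset E) :
    eval (fun e => ψ (φ e)) ((∏ e ∈ A, X e) * ∏ e ∈ B, X e ^ (p - 1)) =
      ψ (∑ e ∈ A, φ e - ∑ e ∈ B, φ e) := by
  simp only [map_mul, map_prod, map_pow, eval_X, ψ.apply_pow_pred_eq_apply_neg, sub_eq_add_neg,
    ψ.map_add_eq_mul, ψ.map_sum_eq_prod, ← sum_neg_distrib]

theorem eval_flowPoly_ne_zero_iff {V E : Type} [Fintype V] [Fintype E] [DecidableEq V] {p : ℕ}
    [NeZero p] {ψ : AddChar (ZMod p) ℂ} (hψ : Function.Injective ψ) (tl hd : E → V)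
    (φ : E → ZMod p) : eval (fun e => ψ (φ e)) (flowPoly p tl hd) ≠ 0 ↔ IsFlow p tl hd φ := by
  simp only [flowPoly, IsFlow, map_prod, prod_ne_zero_iff, mem_univ, true_imp_iff, map_sum,
    map_pow, eval_prod_X_mul_prod_X_pow_pred]
  refine forall_congr' fun v => ?_
  rw [geom_sum_ne_zero_iff_eq_one (NeZero.ne p) (ψ.apply_pow_eq_one _), ← ψ.map_zero_eq_one,
    hψ.eq_iff, sub_eq_zero]

theorem mem_flowIdeal_iff {E : Type} [Finite E] {p : ℕ} (hp : 1 < p) {ψ : AddChar (ZMod p) ℂ}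
    (hψ : Function.Injective ψ) (f : MvPolynomial E ℂ) :
    f ∈ flowIdeal E p ↔ ∀ φ : E → ZMod p, (∀ e, φ e ≠ 0) → eval (fun e => ψ (φ e)) f = 0 := by
  have : Fact (1 < p) := ⟨hp⟩
  set S := (univ.erase (0 : ZMod p)).image ψ
  have hgen (e : E) : ∑ i ∈ range p, (X e : MvPolynomial E ℂ) ^ i = ∏ s ∈ S, (X e - C s) := by
    rw [prod_image hψ.injOn]
    simpa [map_sum, map_prod] using
      congrArg (Polynomial.aeval (X e : MvPolynomial E ℂ)) (AddChar.geom_sum_X_eq_prod hψ)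
  have hS : S.Nonempty := ⟨ψ 1, mem_image_of_mem _ (mem_erase.2 ⟨one_ne_zero, mem_univ _⟩)⟩
  simp_rw [flowIdeal, hgen, mem_span_prod_X_sub_C_iff (fun _ => S) (fun _ => hS)]
  refine ⟨fun h φ hφ => h _ fun e => mem_image_of_mem _ (mem_erase.2 ⟨hφ e, mem_univ _⟩),
    fun h x hx => ?_⟩
  choose φ hφ hφx using fun e => mem_image.1 (hx e)
  obtain rfl : (fun e => ψ (φ e)) = x := funext hφx
  exact h φ fun e => (mem_erase.1 (hφ e)).1

theorem nowhere_zero_flow_iff_not_mem_ideal {V E : Type} [Fintype V] [Fintype E]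
    [DecidableEq V] (p : ℕ) (hp : 2 ≤ p) (tl hd : E → V) :
    (∃ φ : E → ZMod p, (∀ e, φ e ≠ 0) ∧ IsFlow p tl hd φ) ↔
    flowPoly p tl hd ∉ flowIdeal E p := by
  have : NeZero p := ⟨by omega⟩
  rw [mem_flowIdeal_iff hp ZMod.injective_stdAddChar]
  push Not
  exact exists_congr fun φ => and_congr_right fun _ =>
    (eval_flowPoly_ne_zero_iff ZMod.injective_stdAddChar tl hd φ).symm
end

section
/- The flow polynomial f_G^p takes at most two distinct values on the zero set of the ideal I_E^p, namely 0 and p^{|V|}. -/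
open MvPolynomial Finset

theorem flowPoly_two_values {V E : Type} [Fintype V] [Fintype E] [DecidableEq V]
    (p : ℕ) (hp : 2 ≤ p) (tl hd : E → V) (a : E → ℂ)
    (ha : ∀ f ∈ flowIdeal E p, MvPolynomial.eval a f = 0) :
    MvPolynomial.eval a (flowPoly p tl hd) = 0 ∨
    MvPolynomial.eval a (flowPoly p tl hd) = (p : ℂ) ^ Fintype.card V := by
  -- each a_e is a p-th root of unity
  have h1 : ∀ e : E, ∑ i ∈ Finset.range p, (a e) ^ i = 0 := by
    intro e
    have := ha (∑ i ∈ Finset.range p, (X e : MvPolynomial E ℂ) ^ i)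
      (Ideal.subset_span ⟨e, rfl⟩)
    simpa using this
  have h2 : ∀ e : E, (a e) ^ p = 1 := by
    intro e
    have := geom_sum_mul (a e) p
    rw [h1 e, zero_mul] at this
    linear_combination -this
  -- the value at vertex v
  set c : V → ℂ := fun v =>
    (∏ e ∈ univ.filter (fun e => hd e = v), a e) *
      ∏ e ∈ univ.filter (fun e => tl e = v), (a e) ^ (p - 1) with hc
  have h3 : ∀ (e : E) (k : ℕ), ((a e) ^ k) ^ p = 1 := by
    intro e k
    rw [← pow_mul, mul_comm, pow_mul, h2 e, one_pow]
  have hcp : ∀ v, (c v) ^ p = 1 := by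
    intro v
    rw [hc]
    simp only [mul_pow, ← Finset.prod_pow]
    rw [Finset.prod_eq_one (fun e _ => by simpa using h3 e 1),
      Finset.prod_eq_one (fun e _ => h3 e (p - 1)), one_mul]
  have heval : MvPolynomial.eval a (flowPoly p tl hd) =
      ∏ v : V, ∑ i ∈ Finset.range p, (c v) ^ i := by
    simp [flowPoly, hc]
  by_cases hall : ∀ v : V, c v = 1
  · right
    have hv : ∀ v : V, (∑ i ∈ Finset.range p, (c v) ^ i) = (p : ℂ) := fun v => by
      simp [hall v]
    rw [heval, Finset.prod_congr rfl (fun v _ => hv v), Finset.prod_const, Finset.card_univ]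
  · left
    push_neg at hall
    obtain ⟨v, hv⟩ := hall
    rw [heval]
    apply Finset.prod_eq_zero (Finset.mem_univ v)
    have := geom_sum_mul (c v) p
    rw [hcp v, sub_self] at this
    have hne : c v - 1 ≠ 0 := sub_ne_zero.mpr hv
    exact (mul_eq_zero.mp this).resolve_right hne
end

section
/- Every bridgeless chordal graph G has an orientation D such that the only dual 4-flow φ: E → Z_4 with φ(e) ∈ {0,3} for all arcs e is the identically zero map. -/
/-- A simple graph is chordal (triangulated) if every cycle of length at least 4
has a chord. -/
def IsChordal {V : Type} (G : SimpleGraph V) : Prop :=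
  ∀ ⦃v : V⦄ (w : G.Walk v v), w.IsCycle → 4 ≤ w.length →
    ∃ u x : V, u ∈ w.support ∧ x ∈ w.support ∧ G.Adj u x ∧ s(u, x) ∉ w.edges

/-!
In a chordal graph every edge lying on a cycle lies on a triangle: a shortest detour around
the edge closes up to a chordless cycle, which must be a triangle. So it suffices to orient
every finite chordal graph so that each `{0, 3}`-valued dual 4-flow vanishes on all edges of
triangles. Remove a simplicial vertex `v` (Dirac) and orient `G - v` by induction. If `v` has
two neighbours, pick an edge `a → b` of the clique `N(v)` and orient `b → v` and `v → x` for
all other neighbours `x`. Then `a b v` is a directed triangle, and three values in `{0, 3}`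
summing to `0` in `ZMod 4` all vanish; every other edge `v x` lies on the triangle `b v x`,
whose path `b → v → x` is directed and whose third edge `x b` vanishes by induction.
-/

namespace SimpleGraph

variable {V : Type} {G : SimpleGraph V}

theorem spanningCoe_induce_adj {s : Set V} {u v : V} :
    (G.induce s).spanningCoe.Adj u v ↔ G.Adj u v ∧ u ∈ s ∧ v ∈ s := by
  simp

namespace Walk

theorem mk_start_mem_edges_of_forall_length_le {u v x : V} {p : G.Walk u v}
    (hp : ∀ q : G.Walk u v, p.length ≤ q.length) (hx : x ∈ p.support) (hux : G.Adj u x) :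
    s(u, x) ∈ p.edges := by
  classical
  cases p with
  | nil => exact absurd (List.mem_singleton.mp hx).symm hux.ne
  | @cons _ w _ huw p =>
    obtain rfl | hx := List.mem_cons.mp hx
    · exact absurd rfl hux.ne
    by_cases hxw : x = w
    · simp [hxw]
    -- otherwise `u → x ⇝ v` would be shorter than `p`
    have hsplit := congrArg length (p.take_spec hx)
    have htake : (p.takeUntil x hx).length ≠ 0 := fun h => hxw (eq_of_length_eq_zero h).symm
    have := hp (cons hux (p.dropUntil x hx))
    simp only [length_cons, length_append] at this hsplit
    omega

theorem isChordless_of_forall_length_le {u v : V} {p : G.Walk u v}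
    (hp : ∀ q : G.Walk u v, p.length ≤ q.length) : p.IsChordless := by
  rw [isChordless_iff_forall_mem_edges]
  induction p with
  | nil => simp +contextual
  | @cons u w _ huw p ih =>
    have hp' : ∀ q : G.Walk w _, p.length ≤ q.length := fun q => by
      simpa using hp (cons huw q)
    intro x y hx hy hxy
    rcases List.mem_cons.mp hx with rfl | hx'
    · exact mk_start_mem_edges_of_forall_length_le hp hy hxy
    rcases List.mem_cons.mp hy with rfl | hy'
    · rw [Sym2.eq_swap]
      exact mk_start_mem_edges_of_forall_length_le hp hx hxy.symm
    exact List.mem_cons_of_mem _ (ih hp' hx' hy' hxy)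

theorem isChordless_of_length_eq_dist {u v : V} {p : G.Walk u v} (hp : p.length = G.dist u v) :
    p.IsChordless :=
  isChordless_of_forall_length_le fun q => hp ▸ dist_le q

theorem mem_of_mem_support_spanningCoe_induce {s : Set V} {u v : V}
    (p : (G.induce s).spanningCoe.Walk u v) (hu : u ∈ s) {z : V} (hz : z ∈ p.support) :
    z ∈ s := by
  induction p with
  | nil => simpa [List.mem_singleton.mp hz] using hu
  | cons h p ih =>
    obtain rfl | hz := List.mem_cons.mp hz
    · exact hu
    · exact ih (spanningCoe_induce_adj.mp h).2.2 hz

end Walk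

end SimpleGraph

open SimpleGraph

section

variable {V : Type}

namespace IsChordal

variable {G : SimpleGraph V}

theorem length_le_three_of_isChordless (hG : IsChordal G) {v : V} {c : G.Walk v v}
    (hc : c.IsCycle) (hcl : c.IsChordless) : c.length ≤ 3 := by
  by_contra! h
  obtain ⟨x, y, hx, hy, hxy, hnot⟩ := hG c hc h
  exact hnot (hcl.mem_edges hx hy hxy)

theorem exists_adj_of_isChordless (hG : IsChordal G) {a s t : V} {p : G.Walk t s}
    (hp : p.IsPath) (hpc : p.IsChordless) (hst : s ≠ t) (hnadj : ¬G.Adj s t)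
    (ha : a ∉ p.support) (has : G.Adj a s) (hat : G.Adj a t) :
    ∃ x ∈ p.support, x ≠ s ∧ x ≠ t ∧ G.Adj a x := by
  by_contra! hnone
  have hlen : 2 ≤ p.length := by
    by_contra! h
    interval_cases hl : p.length
    · exact hst (Walk.eq_of_length_eq_zero hl).symm
    · exact hnadj (Walk.adj_of_length_eq_one hl).symm
  let c : G.Walk a a := .cons hat (p.concat has.symm)
  have hc : c.IsCycle := by
    refine (Walk.cons_isCycle_iff _ _).mpr ⟨hp.concat ha _, fun h => ?_⟩
    rw [Walk.edges_concat, List.concat_eq_append, List.mem_append, List.mem_singleton] at h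
    obtain h | h := h
    · exact ha (p.fst_mem_support_of_mem_edges h)
    · obtain ⟨rfl, -⟩ | ⟨-, rfl⟩ := Sym2.eq_iff.mp h
      exacts [has.ne rfl, hst rfl]
  have hcl : c.IsChordless := by
    rw [Walk.isChordless_iff_forall_mem_edges]
    have hedge : ∀ x ∈ p.support, G.Adj a x → s(a, x) ∈ c.edges := fun x hx hax => by
      by_cases hxs : x = s
      · subst hxs; simp [c, Walk.edges_concat, Sym2.eq_swap]
      · by_cases hxt : x = t
        · subst hxt; simp [c]
        · exact absurd hax (hnone x hx hxs hxt)
    have hmem : ∀ x ∈ c.support, x = a ∨ x ∈ p.support := fun x hx => by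
      simp only [c, Walk.support_cons, Walk.support_concat, List.mem_cons, List.mem_append] at hx
      tauto
    intro x y hx hy hxy
    rcases hmem x hx with rfl | hx' <;> rcases hmem y hy with rfl | hy'
    · exact absurd hxy (G.loopless.irrefl _)
    · exact hedge y hy' hxy
    · exact Sym2.eq_swap ▸ hedge x hx' hxy.symm
    · simpa [c, Walk.edges_concat] using Or.inr (Or.inl (hpc.mem_edges hx' hy' hxy))
  have := hG.length_le_three_of_isChordless hc hcl
  simp only [c, Walk.length_cons, Walk.length_concat] at this
  omega

theorem exists_adj_adj_of_not_isBridge (hG : IsChordal G) {x y : V} (hxy : G.Adj x y)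
    (hb : ¬G.IsBridge s(x, y)) : ∃ z, G.Adj x z ∧ G.Adj y z := by
  set G' := G.deleteEdges {s(x, y)}
  obtain ⟨q, hq, hqlen⟩ := (not_not.mp (isBridge_iff.not.mp hb)).symm.exists_path_of_dist
  have hle : G' ≤ G := deleteEdges_le _
  -- closing the shortest `y`-`x` path of `G - xy` by `xy` gives a chordless cycle
  let c : G.Walk x x := .cons hxy (q.mapLe hle)
  have hxyq : s(x, y) ∉ q.edges := fun h => by
    simpa [G'] using q.edges_subset_edgeSet h
  have hc : c.IsCycle :=
    (Walk.cons_isCycle_iff _ _).mpr ⟨hq.mapLe hle, by rwa [Walk.edges_mapLe_eq_edges]⟩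
  have hcl : c.IsChordless := by
    rw [Walk.isChordless_iff_forall_mem_edges]
    intro u w hu hw huw
    have hsupp : ∀ z ∈ c.support, z ∈ q.support := fun z hz => by
      simp only [c, Walk.support_cons, Walk.support_mapLe_eq_support, List.mem_cons] at hz
      exact hz.elim (· ▸ q.end_mem_support) id
    by_cases he : s(u, w) = s(x, y)
    · simp [c, he]
    · have huw' : G'.Adj u w := by simpa [G', he] using huw
      simpa [c] using Or.inr ((q.isChordless_of_length_eq_dist hqlen).mem_edges
        (hsupp u hu) (hsupp w hw) huw')
  have hlen : q.length = 2 := by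
    have h3 := hG.length_le_three_of_isChordless hc hcl
    have h3' := hc.three_le_length
    simp only [c, Walk.length_cons, Walk.length_mapLe] at h3 h3'
    omega
  have h₁ := hle (q.adj_getVert_succ (by omega : 0 < q.length))
  have h₂ := hle (q.adj_getVert_succ (by omega : 1 < q.length))
  rw [Walk.getVert_zero] at h₁
  rw [q.getVert_of_length_le (by omega : q.length ≤ 1 + 1)] at h₂
  exact ⟨q.getVert 1, h₂.symm, h₁⟩

theorem deleteIncidenceSet (hG : IsChordal G) (v : V) : IsChordal (G.deleteIncidenceSet v) := by
  intro c w hw hlen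
  have hle := G.deleteIncidenceSet_le v
  obtain ⟨x, y, hx, hy, hxy, hnot⟩ := hG (w.mapLe hle) (hw.mapLe hle) (by simpa using hlen)
  rw [Walk.support_mapLe_eq_support] at hx hy
  rw [Walk.edges_mapLe_eq_edges] at hnot
  have hne : ∀ z ∈ w.support, z ≠ v := fun z hz => by
    have := G.support_deleteIncidenceSet_subset v
      (mem_support_of_mem_walk_support w hw.not_nil hz)
    simpa using this.2
  exact ⟨x, y, hx, hy, deleteIncidenceSet_adj.mpr ⟨hxy, hne x hx, hne y hy⟩, hnot⟩

end IsChordal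

/-- `G[A]` is complete or has two non-adjacent simplicial vertices. -/
def CliqueOrTwoSimplicial (G : SimpleGraph V) (A : Finset V) : Prop :=
  G.IsClique (A : Set V) ∨ ∃ v ∈ A, ∃ w ∈ A, v ≠ w ∧ ¬G.Adj v w ∧
    G.IsClique (↑A ∩ G.neighborSet v) ∧ G.IsClique (↑A ∩ G.neighborSet w)

theorem CliqueOrTwoSimplicial.exists_mem_isClique_of_closed [DecidableEq V]
    {G : SimpleGraph V} {A C S : Finset V} (h : CliqueOrTwoSimplicial G (C ∪ S)) {c : V}
    (hc : c ∈ C) (hS : G.IsClique (S : Set V))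
    (hclosed : ∀ x ∈ C, ∀ y ∈ A, G.Adj x y → y ∈ C ∪ S) :
    ∃ p ∈ C, G.IsClique (↑A ∩ G.neighborSet p) := by
  have hsub : ∀ p ∈ C, ↑A ∩ G.neighborSet p ⊆ ↑(C ∪ S) ∩ G.neighborSet p :=
    fun p hp y hy => ⟨hclosed p hp y hy.1 hy.2, hy.2⟩
  rcases h with hCS | ⟨v, hv, w, hw, hvw, hnadj, hsv, hsw⟩
  · exact ⟨c, hc, hCS.subset fun y hy => (hsub c hc hy).1⟩
  rw [Finset.mem_union] at hv hw
  by_cases hvC : v ∈ C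
  · exact ⟨v, hvC, hsv.subset (hsub v hvC)⟩
  by_cases hwC : w ∈ C
  · exact ⟨w, hwC, hsw.subset (hsub w hwC)⟩
  exact absurd (hS (hv.resolve_left hvC) (hw.resolve_left hwC) hvw) hnadj

theorem closed_sdiff_union [DecidableEq V] {G : SimpleGraph V} {A C S : Finset V}
    (hC : ∀ x ∈ C, ∀ y ∈ A, G.Adj x y → y ∈ C ∪ S) :
    ∀ x ∈ A \ (C ∪ S), ∀ y ∈ A, G.Adj x y → y ∈ A \ (C ∪ S) ∪ S := by
  intro x hx y hy hxy
  obtain ⟨hxA, hxCS⟩ := Finset.mem_sdiff.mp hx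
  by_cases hyC : y ∈ C
  · exact absurd (hC y hyC x hxA hxy.symm) hxCS
  by_cases hyS : y ∈ S
  · exact Finset.mem_union_right _ hyS
  · exact Finset.mem_union_left _ (by simp [hy, hyC, hyS])

namespace IsChordal

variable {G : SimpleGraph V}

/-- A shortest `t`-`s` path through `B`, closed up via `a`, would otherwise be a chordless cycle
of length at least four. -/
theorem adj_of_reachable_spanningCoe_induce (hG : IsChordal G) {B : Set V} {a s t xs xt : V}
    (haB : a ∉ B) (hB : ∀ z ∈ B, ¬G.Adj a z) (has : G.Adj a s) (hat : G.Adj a t)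
    (hsx : G.Adj s xs) (htx : G.Adj t xt) (hxs : xs ∈ B)
    (hreach : (G.induce B).spanningCoe.Reachable xs xt) (hst : s ≠ t) : G.Adj s t := by
  by_contra hnadj
  obtain ⟨r⟩ := hreach
  have hxt : xt ∈ B := r.mem_of_mem_support_spanningCoe_induce hxs r.end_mem_support
  set T : Set V := insert s (insert t B)
  have hBT : (G.induce B).spanningCoe ≤ (G.induce T).spanningCoe := fun u w h => by
    simp only [T, spanningCoe_induce_adj, Set.mem_insert_iff] at h ⊢
    tauto
  have hreach' : (G.induce T).spanningCoe.Reachable t s :=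
    (Adj.reachable (by simp [T, htx, hxt])).trans
      ((r.reachable.symm.mono hBT).trans (Adj.reachable (by simp [T, hsx.symm, hxs])))
  obtain ⟨p, hp, hplen⟩ := hreach'.exists_path_of_dist
  have hT : ∀ z ∈ p.support, z ∈ T :=
    fun z hz => p.mem_of_mem_support_spanningCoe_induce (by simp [T]) hz
  have hle := spanningCoe_induce_le G T
  have hpc : (p.mapLe hle).IsChordless := by
    rw [Walk.isChordless_iff_forall_mem_edges, Walk.support_mapLe_eq_support,
      Walk.edges_mapLe_eq_edges]
    intro u w hu hw huw
    exact (p.isChordless_of_length_eq_dist hplen).mem_edges hu hw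
      (by simp [hT u hu, hT w hw, huw])
  have haT : a ∉ T := by simp [T, has.ne, hat.ne, haB]
  obtain ⟨x, hx, hxs', hxt', hax⟩ := hG.exists_adj_of_isChordless (hp.mapLe hle) hpc hst hnadj
    (by rw [Walk.support_mapLe_eq_support]; exact fun h => haT (hT a h)) has hat
  rw [Walk.support_mapLe_eq_support] at hx
  exact hB x (by simpa [T, hxs', hxt'] using hT x hx) hax

theorem exists_isClique_separator [DecidableEq V] (hG : IsChordal G) {A : Finset V} {a b : V}
    (hb : b ∈ A) (hab : a ≠ b) (hnab : ¬G.Adj a b) :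
    ∃ Cb S : Finset V, b ∈ Cb ∧ a ∉ Cb ∪ S ∧ Cb ∪ S ⊆ A ∧ Disjoint Cb S ∧
      G.IsClique (S : Set V) ∧ ∀ x ∈ Cb, ∀ y ∈ A, G.Adj x y → y ∈ Cb ∪ S := by
  classical
  -- `Cb` is the component of `b` in `G[A] - N[a]`, and `S ⊆ N(a)` is its neighbourhood
  set B : Set V := {z | z ∈ A ∧ z ≠ a ∧ ¬G.Adj a z}
  set Cb := A.filter fun z => (G.induce B).spanningCoe.Reachable b z
  set S := A.filter fun s => G.Adj a s ∧ ∃ x ∈ Cb, G.Adj s x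
  have hbB : b ∈ B := ⟨hb, hab.symm, hnab⟩
  have hCbB : ∀ z ∈ Cb, z ∈ B := fun z hz => by
    obtain ⟨p⟩ := (Finset.mem_filter.mp hz).2
    exact p.mem_of_mem_support_spanningCoe_induce hbB p.end_mem_support
  refine ⟨Cb, S, Finset.mem_filter.mpr ⟨hb, .refl _⟩, ?_,
    Finset.union_subset (Finset.filter_subset _ _) (Finset.filter_subset _ _), ?_, ?_, ?_⟩
  · exact Finset.notMem_union.mpr ⟨fun h => (hCbB a h).2.1 rfl,
      fun h => (Finset.mem_filter.mp h).2.1.ne rfl⟩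
  · exact Finset.disjoint_left.mpr fun z hz hzS =>
      (hCbB z hz).2.2 (Finset.mem_filter.mp hzS).2.1
  · intro s hs t ht hst
    obtain ⟨-, has, xs, hxs, hsxs⟩ := Finset.mem_filter.mp hs
    obtain ⟨-, hat, xt, hxt, htxt⟩ := Finset.mem_filter.mp ht
    exact hG.adj_of_reachable_spanningCoe_induce (fun h => h.2.1 rfl) (fun z hz => hz.2.2)
      has hat hsxs htxt (hCbB xs hxs)
      ((Finset.mem_filter.mp hxs).2.symm.trans (Finset.mem_filter.mp hxt).2) hst
  · intro x hx y hy hxy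
    have hxB := hCbB x hx
    by_cases hyB : y ∈ B
    · refine Finset.mem_union_left _ (Finset.mem_filter.mpr ⟨hy, ?_⟩)
      exact (Finset.mem_filter.mp hx).2.trans
        (Adj.reachable (spanningCoe_induce_adj.mpr ⟨hxy, hxB, hyB⟩))
    · have hay : G.Adj a y := by
        by_contra hay
        exact hyB ⟨hy, fun h => hxB.2.2 (h ▸ hxy.symm), hay⟩
      exact Finset.mem_union_right _ (Finset.mem_filter.mpr ⟨hy, hay, x, hx, hxy.symm⟩)

/-- Dirac's lemma. -/
theorem cliqueOrTwoSimplicial (hG : IsChordal G) (A : Finset V) : CliqueOrTwoSimplicial G A := by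
  classical
  induction A using Finset.strongInduction with
  | H A ih =>
  by_cases hA : G.IsClique (A : Set V)
  · exact Or.inl hA
  obtain ⟨a, ha, b, hb, hab, hnab⟩ : ∃ a ∈ A, ∃ b ∈ A, a ≠ b ∧ ¬G.Adj a b := by
    simpa [IsClique, Set.Pairwise] using hA
  obtain ⟨Cb, S, hbCb, haCbS, hCbS, hdisj, hS, hCb_closed⟩ :=
    hG.exists_isClique_separator hb hab hnab
  set Ca := A \ (Cb ∪ S)
  have hCa : Ca ∪ S ⊂ A := by
    refine (Finset.ssubset_iff_of_subset (Finset.union_subset Finset.sdiff_subset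
      (Finset.union_subset_iff.mp hCbS).2)).mpr ⟨b, hb, Finset.notMem_union.mpr ⟨?_,
        Finset.disjoint_left.mp hdisj hbCb⟩⟩
    exact fun h => (Finset.mem_sdiff.mp h).2 (Finset.mem_union_left _ hbCb)
  have hCb : Cb ∪ S ⊂ A := (Finset.ssubset_iff_of_subset hCbS).mpr ⟨a, ha, haCbS⟩
  obtain ⟨p, hp, hpA⟩ := (ih _ hCa).exists_mem_isClique_of_closed
    (Finset.mem_sdiff.mpr ⟨ha, haCbS⟩) hS
    (closed_sdiff_union hCb_closed)
  obtain ⟨q, hq, hqA⟩ := (ih _ hCb).exists_mem_isClique_of_closed hbCb hS hCb_closed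
  have hqA' : q ∈ A := hCbS (Finset.mem_union_left _ hq)
  have hq' : q ∉ Ca ∪ S := by simp [Ca, hq, Finset.disjoint_left.mp hdisj hq]
  exact Or.inr ⟨p, (Finset.mem_sdiff.mp hp).1, q, hqA',
    fun h => hq' (h ▸ Finset.mem_union_left _ hp),
    fun hpq => hq' (closed_sdiff_union hCb_closed p hp q hqA' hpq), hpA, hqA⟩

theorem exists_isClique_neighborSet (hG : IsChordal G) {A : Finset V} (hA : A.Nonempty)
    (hsupp : G.support ⊆ A) : ∃ v ∈ A, G.IsClique (G.neighborSet v) := by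
  have hN : ∀ v, G.neighborSet v ⊆ A := fun v w hw => hsupp ⟨v, hw.symm⟩
  rcases hG.cliqueOrTwoSimplicial A with hA' | ⟨v, hv, -, -, -, -, hcl, -⟩
  · obtain ⟨v, hv⟩ := hA
    exact ⟨v, hv, hA'.subset (hN v)⟩
  · exact ⟨v, hv, by rwa [Set.inter_eq_right.mpr (hN v)] at hcl⟩

end IsChordal

theorem ZMod.eq_zero_of_add_add_eq_zero_of_zero_or_three :
    ∀ a b c : ZMod 4, (a = 0 ∨ a = 3) → (b = 0 ∨ b = 3) → (c = 0 ∨ c = 3) →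
      a + b + c = 0 → a = 0 ∧ b = 0 ∧ c = 0 := by
  decide

section DualFlow

variable {E E' : Type} {p : ℕ} {tl hd : E → V} {φ : E → ZMod p}

def Traverses (tl hd : E → V) (e : E) (σ : Bool) (x y : V) : Prop :=
  (σ = true → tl e = x ∧ hd e = y) ∧ (σ = false → hd e = x ∧ tl e = y)

theorem IsDualFlow.triangle (hφ : IsDualFlow p tl hd φ) {x y z : V} {e₁ e₂ e₃ : E}
    {σ₁ σ₂ σ₃ : Bool} (h₁ : Traverses tl hd e₁ σ₁ x y) (h₂ : Traverses tl hd e₂ σ₂ y z)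
    (h₃ : Traverses tl hd e₃ σ₃ z x) :
    ((if σ₁ then φ e₁ else -φ e₁) + if σ₂ then φ e₂ else -φ e₂) +
      (if σ₃ then φ e₃ else -φ e₃) = 0 := by
  have := hφ 3 ![x, y, z, x] ![e₁, e₂, e₃] ![σ₁, σ₂, σ₃] rfl
    (fun i => by fin_cases i <;> assumption)
  rwa [Fin.sum_univ_three] at this

theorem IsDualFlow.comp (hφ : IsDualFlow p tl hd φ) (f : E' → E) :
    IsDualFlow p (tl ∘ f) (hd ∘ f) (φ ∘ f) :=
  fun n v e σ h0 h => hφ n v (f ∘ e) σ h0 h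

end DualFlow

section Orientation

variable {G : SimpleGraph V}

def IsOrientation (G : SimpleGraph V) (o : G.edgeSet → V × V) : Prop :=
  ∀ e : G.edgeSet, (e : Sym2 V) = s((o e).1, (o e).2)

def RigidOnTriangles (G : SimpleGraph V) (o : G.edgeSet → V × V) : Prop :=
  ∀ φ : G.edgeSet → ZMod 4, IsDualFlow 4 (fun e => (o e).1) (fun e => (o e).2) φ →
    (∀ e, φ e = 0 ∨ φ e = 3) →
    ∀ ⦃x y z : V⦄ (hxy : G.Adj x y), G.Adj x z → G.Adj y z → φ ⟨s(x, y), hxy⟩ = 0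

theorem traverses_of_eq {o : G.edgeSet → V × V} {e : G.edgeSet} {x y : V} (h : o e = (x, y)) :
    Traverses (fun e => (o e).1) (fun e => (o e).2) e true x y :=
  ⟨fun _ => by simp [h], fun h => Bool.noConfusion h⟩

namespace IsOrientation

variable {o : G.edgeSet → V × V}

theorem exists_traverses (ho : IsOrientation G o) {x y : V} (h : G.Adj x y) :
    ∃ σ, Traverses (fun e => (o e).1) (fun e => (o e).2) ⟨s(x, y), h⟩ σ x y := by
  rcases Sym2.eq_iff.mp (ho ⟨s(x, y), h⟩) with ⟨h₁, h₂⟩ | ⟨h₁, h₂⟩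
  · exact ⟨true, fun _ => ⟨h₁.symm, h₂.symm⟩, fun h => Bool.noConfusion h⟩
  · exact ⟨false, fun h => Bool.noConfusion h, fun _ => ⟨h₁.symm, h₂.symm⟩⟩

theorem exists_eq_of_adj (ho : IsOrientation G o) {a₀ b₀ : V} (h : G.Adj a₀ b₀) :
    ∃ a b, ∃ hab : G.Adj a b, s(a, b) = s(a₀, b₀) ∧ o ⟨s(a, b), hab⟩ = (a, b) := by
  obtain ⟨⟨a, b⟩, hab⟩ : ∃ q : V × V, o ⟨s(a₀, b₀), h⟩ = q := ⟨_, rfl⟩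
  have he : s(a₀, b₀) = s(a, b) := by simpa [hab] using ho ⟨s(a₀, b₀), h⟩
  have hadj : s(a, b) ∈ G.edgeSet := he ▸ G.mem_edgeSet.mpr h
  refine ⟨a, b, hadj, he.symm, ?_⟩
  rw [← hab]
  exact congrArg o (Subtype.ext he.symm)

end IsOrientation

end Orientation

section Extension

variable {G : SimpleGraph V} {v : V}

open Classical in
noncomputable def extendOrientation (v b : V) (o' : (G.deleteIncidenceSet v).edgeSet → V × V)
    (e : G.edgeSet) : V × V :=
  if h : v ∈ (e : Sym2 V) then
    if Sym2.Mem.other h = b then (b, v) else (v, Sym2.Mem.other h)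
  else o' ⟨e, (G.edgeSet_deleteIncidenceSet v).symm.subset ⟨e.2, fun he => h he.2⟩⟩

variable {b : V} {o' : (G.deleteIncidenceSet v).edgeSet → V × V}

theorem isOrientation_extendOrientation (ho' : IsOrientation _ o') :
    IsOrientation G (extendOrientation v b o') := by
  intro e
  unfold extendOrientation
  split_ifs with h hb
  · rw [← Sym2.other_spec h, hb, Sym2.eq_swap]
  · exact (Sym2.other_spec h).symm
  · exact ho' ⟨e, _⟩

theorem extendOrientation_coe (e : (G.deleteIncidenceSet v).edgeSet) :
    extendOrientation v b o' ⟨e, edgeSet_mono (G.deleteIncidenceSet_le v) e.2⟩ = o' e := by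
  have he := (G.edgeSet_deleteIncidenceSet v).subset e.2
  have hv : v ∉ (e : Sym2 V) := fun h => he.2 ⟨he.1, h⟩
  simp [extendOrientation, hv]

theorem extendOrientation_of_adj_self (h : G.Adj v b) :
    extendOrientation v b o' ⟨s(v, b), h⟩ = (b, v) := by
  have hother : Sym2.Mem.other (Sym2.mem_mk_left v b) = b :=
    Sym2.congr_right.mp (Sym2.other_spec _)
  simp [extendOrientation, hother]

theorem extendOrientation_of_adj_of_ne {x : V} (h : G.Adj v x) (hx : x ≠ b) :
    extendOrientation v b o' ⟨s(v, x), h⟩ = (v, x) := by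
  have hother : Sym2.Mem.other (Sym2.mem_mk_left v x) = x :=
    Sym2.congr_right.mp (Sym2.other_spec _)
  simp [extendOrientation, hother, hx]

theorem RigidOnTriangles.extendOrientation_eq_zero
    (hrig : RigidOnTriangles _ o') {φ : G.edgeSet → ZMod 4}
    (hφ : IsDualFlow 4 (fun e => (extendOrientation v b o' e).1)
      (fun e => (extendOrientation v b o' e).2) φ)
    (hvals : ∀ e, φ e = 0 ∨ φ e = 3) {x y z : V} (hxy : G.Adj x y) (hxz : G.Adj x z)
    (hyz : G.Adj y z) (hx : x ≠ v) (hy : y ≠ v) (hz : z ≠ v) : φ ⟨s(x, y), hxy⟩ = 0 := by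
  let incl := Set.inclusion (edgeSet_mono (G.deleteIncidenceSet_le v))
  have hφ' : IsDualFlow 4 (fun e => (o' e).1) (fun e => (o' e).2) (φ ∘ incl) := by
    have := hφ.comp incl
    simpa [Function.comp_def, incl, Set.inclusion, extendOrientation_coe] using this
  exact hrig _ hφ' (fun e => hvals _) (deleteIncidenceSet_adj.mpr ⟨hxy, hx, hy⟩)
    (deleteIncidenceSet_adj.mpr ⟨hxz, hx, hz⟩) (deleteIncidenceSet_adj.mpr ⟨hyz, hy, hz⟩)

theorem RigidOnTriangles.extendOrientation_of_forall_eq (hrig : RigidOnTriangles _ o')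
    (hv : ∀ a c, G.Adj v a → G.Adj v c → a = c) :
    RigidOnTriangles G (extendOrientation v b o') := by
  intro φ hφ hvals x y z hxy hxz hyz
  have hne : ∀ {p q r}, G.Adj p q → G.Adj p r → G.Adj q r → p ≠ v := by
    rintro p q r hpq hpr hqr rfl
    exact hqr.ne (hv q r hpq hpr)
  exact hrig.extendOrientation_eq_zero hφ hvals hxy hxz hyz (hne hxy hxz hyz)
    (hne hxy.symm hyz hxz) (hne hxz.symm hyz.symm hxy)

theorem eq_zero_of_isClique_neighborSet {M : Type} [Zero M] {φ : G.edgeSet → M}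
    (hv : G.IsClique (G.neighborSet v)) {a b : V} (hva : G.Adj v a) (hvb : G.Adj v b)
    (hab : G.Adj a b) (hφab : φ ⟨s(a, b), hab⟩ = 0)
    (hφv : ∀ x (hvx : G.Adj v x), φ ⟨s(v, x), hvx⟩ = 0)
    (hφ' : ∀ {x y z : V} (hxy : G.Adj x y), G.Adj x z → G.Adj y z → x ≠ v → y ≠ v →
      z ≠ v → φ ⟨s(x, y), hxy⟩ = 0)
    {x y z : V} (hxy : G.Adj x y) (hxz : G.Adj x z) (hyz : G.Adj y z) :
    φ ⟨s(x, y), hxy⟩ = 0 := by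
  have hswap {x y : V} (h : G.Adj x y) : φ ⟨s(x, y), h⟩ = φ ⟨s(y, x), h.symm⟩ :=
    congrArg φ (Subtype.ext Sym2.eq_swap)
  by_cases hx : x = v
  · subst hx
    exact hφv y hxy
  by_cases hy : y = v
  · subst hy
    rw [hswap]
    exact hφv x hxy.symm
  by_cases hz : z = v
  swap
  · exact hφ' hxy hxz hyz hx hy hz
  -- `x y` also lies in a triangle with `a` or `b`, unless `{x, y} = {a, b}`
  subst hz
  by_cases ha : x ≠ a ∧ y ≠ a
  · exact hφ' hxy (hv hxz.symm hva ha.1) (hv hyz.symm hva ha.2) hx hy hva.ne'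
  by_cases hb : x ≠ b ∧ y ≠ b
  · exact hφ' hxy (hv hxz.symm hvb hb.1) (hv hyz.symm hvb hb.2) hx hy hvb.ne'
  push Not at ha hb
  by_cases hxa : x = a
  · obtain rfl := hxa
    obtain rfl := hb hab.ne
    exact hφab
  · obtain rfl := ha hxa
    obtain rfl : x = b := by_contra fun hxb => hab.ne (hb hxb)
    rw [hswap]
    exact hφab

theorem RigidOnTriangles.extendOrientation_of_adj (hv : G.IsClique (G.neighborSet v))
    (ho' : IsOrientation _ o') (hrig : RigidOnTriangles _ o') {a : V}
    (hab : (G.deleteIncidenceSet v).Adj a b) (hoab : o' ⟨s(a, b), hab⟩ = (a, b))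
    (hva : G.Adj v a) (hvb : G.Adj v b) : RigidOnTriangles G (extendOrientation v b o') := by
  intro φ hφ hvals
  obtain ⟨habG, hav, hbv⟩ := deleteIncidenceSet_adj.mp hab
  have h0 {x y z : V} := hrig.extendOrientation_eq_zero hφ hvals (x := x) (y := y) (z := z)
  -- the triangle `a → b → v → a` is a directed cycle
  have hcyc := hφ.triangle
    (traverses_of_eq ((extendOrientation_coe ⟨s(a, b), hab⟩).trans hoab))
    (traverses_of_eq (extendOrientation_of_adj_self hvb))
    (traverses_of_eq (extendOrientation_of_adj_of_ne hva habG.ne))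
  rw [if_pos rfl, if_pos rfl, if_pos rfl] at hcyc
  obtain ⟨hφab, hφbv, hφva⟩ := ZMod.eq_zero_of_add_add_eq_zero_of_zero_or_three _ _ _
    (hvals _) (hvals _) (hvals _) hcyc
  intro x y z
  refine eq_zero_of_isClique_neighborSet hv hva hvb habG hφab (fun x hvx => ?_) h0
  by_cases hxb : x = b
  · subst hxb
    exact hφbv
  by_cases hxa : x = a
  · subst hxa
    exact hφva
  -- the path `b → v → x` is directed and `x b` lies in the triangle `x b a` of `G - v`
  have hxb' : G.Adj x b := hv hvx hvb hxb
  obtain ⟨σ, hσ⟩ := (isOrientation_extendOrientation ho').exists_traverses hxb'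
  have htri := hφ.triangle (traverses_of_eq (extendOrientation_of_adj_self hvb))
    (traverses_of_eq (extendOrientation_of_adj_of_ne hvx hxb)) hσ
  rw [h0 hxb' (hv hvx hva hxa) habG.symm hvx.ne' hbv hav, hφbv] at htri
  simpa using htri

theorem RigidOnTriangles.extend (hrig : RigidOnTriangles _ o')
    (hv : G.IsClique (G.neighborSet v)) (ho' : IsOrientation _ o') :
    ∃ o, IsOrientation G o ∧ RigidOnTriangles G o := by
  by_cases h2 : ∃ a₀ b₀, G.Adj v a₀ ∧ G.Adj v b₀ ∧ a₀ ≠ b₀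
  · obtain ⟨a₀, b₀, ha₀, hb₀, hne⟩ := h2
    obtain ⟨a, b, hab, hab₀, hoab⟩ :=
      ho'.exists_eq_of_adj (deleteIncidenceSet_adj.mpr ⟨hv ha₀ hb₀ hne, ha₀.ne', hb₀.ne'⟩)
    have hN : ∀ x ∈ s(a, b), G.Adj v x := by
      rw [hab₀]
      simpa using ⟨ha₀, hb₀⟩
    exact ⟨_, isOrientation_extendOrientation ho', hrig.extendOrientation_of_adj hv ho' hab
      hoab (hN a (Sym2.mem_mk_left _ _)) (hN b (Sym2.mem_mk_right _ _))⟩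
  · push Not at h2
    exact ⟨_, isOrientation_extendOrientation (b := v) ho',
      hrig.extendOrientation_of_forall_eq h2⟩

end Extension

theorem IsChordal.exists_rigidOnTriangles {G : SimpleGraph V} (hG : IsChordal G) (A : Finset V)
    (hA : G.support ⊆ A) : ∃ o, IsOrientation G o ∧ RigidOnTriangles G o := by
  classical
  induction A using Finset.strongInduction generalizing G with
  | H A ih =>
  rcases A.eq_empty_or_nonempty with rfl | hne
  · refine ⟨fun e => Quot.out (e : Sym2 V), fun e => (Quot.out_eq _).symm, ?_⟩
    intro φ _ _ x y z hxy
    simpa using hA ⟨y, hxy⟩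
  obtain ⟨v, hvA, hv⟩ := hG.exists_isClique_neighborSet hne hA
  obtain ⟨o', ho', hrig⟩ := ih _ (Finset.erase_ssubset hvA) (hG.deleteIncidenceSet v)
    fun x hx => by simpa using And.imp_left (@hA x) (G.support_deleteIncidenceSet_subset v hx)
  exact hrig.extend hv ho'

end

/-- Every bridgeless chordal graph has an orientation on which the only dual 4-flow
taking values in `{0, 3}` is the identically zero map. -/
theorem bridgeless_chordal_orientation_rigid {V : Type} [Fintype V]
    (G : SimpleGraph V)
    (hbridge : ∀ e : Sym2 V, ¬ G.IsBridge e) (hchordal : IsChordal G) :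
    ∃ o : G.edgeSet → V × V,
      (∀ e : G.edgeSet, (e : Sym2 V) = s((o e).1, (o e).2)) ∧
      ∀ φ : G.edgeSet → ZMod 4,
        IsDualFlow 4 (fun e => (o e).1) (fun e => (o e).2) φ →
        (∀ e, φ e = 0 ∨ φ e = 3) →
        ∀ e, φ e = 0 := by
  obtain ⟨o, ho, hrig⟩ := hchordal.exists_rigidOnTriangles Finset.univ (by simp)
  refine ⟨o, ho, fun φ hφ hvals ⟨e, he⟩ => ?_⟩
  induction e using Sym2.ind with
  | h x y =>
  obtain ⟨z, hxz, hyz⟩ := hchordal.exists_adj_adj_of_not_isBridge he (hbridge _)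
  exact hrig φ hφ hvals he hxz hyz
end

section
/- An undirected graph G=(V,E) has a nowhere-zero four-flow if and only if the four-flow polynomial f_G := Π_{v∈V} (Π_{e∈δ(v)} x_e + 1)(Π_{e∈δ(v)} y_e + 1) does not belong to the ideal I_E = ideal{ x_e^2 − 1, y_e^2 − 1, (x_e+1)(y_e+1) : e ∈ E }. -/
open MvPolynomial Finset

/-- The ideal `I_E` generated by `x_e² - 1`, `y_e² - 1`, `(x_e+1)(y_e+1)` for `e ∈ E`,
where `x_e = X (Sum.inl e)` and `y_e = X (Sum.inr e)`. -/
noncomputable def fourFlowIdeal (E : Type) : Ideal (MvPolynomial (E ⊕ E) ℂ) :=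
  Ideal.span
    ((Set.range fun e : E => (X (Sum.inl e) : MvPolynomial (E ⊕ E) ℂ) ^ 2 - 1) ∪
     (Set.range fun e : E => (X (Sum.inr e) : MvPolynomial (E ⊕ E) ℂ) ^ 2 - 1) ∪
     (Set.range fun e : E =>
       ((X (Sum.inl e) : MvPolynomial (E ⊕ E) ℂ) + 1) * (X (Sum.inr e) + 1)))

/-- The four-flow polynomial of an undirected (multi)graph given by endpoints map
`ends : E → Sym2 V`. -/
noncomputable def fourFlowPoly {V E : Type} [Fintype V] [Fintype E] [DecidableEq V]
    (ends : E → Sym2 V) : MvPolynomial (E ⊕ E) ℂ :=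
  ∏ v : V,
    ((∏ e ∈ univ.filter (fun e => v ∈ ends e),
        (X (Sum.inl e) : MvPolynomial (E ⊕ E) ℂ)) + 1) *
    ((∏ e ∈ univ.filter (fun e => v ∈ ends e),
        (X (Sum.inr e) : MvPolynomial (E ⊕ E) ℂ)) + 1)

/-! Through the character `0 ↦ 1, 1 ↦ -1` of `ℤ/2`, labellings `φ : E → ℤ/2 × ℤ/2` are the
points of the cube `{±1}^(E ⊕ E)`, and the zeros of `I_E` are the nowhere-zero labellings.
`I_E` is the whole vanishing ideal of this set: by the Combinatorial Nullstellensatz a polynomial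
vanishing on the cube lies in `⟨x_e² - 1, y_e² - 1⟩`, and multiplying by
`∏_e (1 - (x_e + 1)(y_e + 1)/4) ≡ 1 (mod I_E)` kills the cube points outside the zero set.
At the point of `φ` the factor of `f_G` at `v` is `4` if the boundary of `φ` at `v` vanishes
and `0` otherwise, so `f_G ∉ I_E` exactly when some nowhere-zero `φ` is a flow. -/

theorem mem_span_X_sq_sub_one_of_eval_eq_zero {R σ : Type*} [CommRing R] [IsDomain R]
    [NeZero (2 : R)] [Finite σ] {f : MvPolynomial σ R}
    (hf : ∀ x : σ → R, (∀ i, x i = 1 ∨ x i = -1) → eval x f = 0) :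
    f ∈ Ideal.span (Set.range fun i => (X i : MvPolynomial σ R) ^ 2 - 1) := by
  classical
  have hroots (i : σ) :
      ∏ r ∈ ({1, -1} : Finset R), (X i - C r) = (X i : MvPolynomial σ R) ^ 2 - 1 := by
    rw [prod_pair (by simpa [eq_neg_iff_add_eq_zero, one_add_one_eq_two] using NeZero.ne (2 : R))]
    simp only [map_one, map_neg]
    ring
  obtain ⟨h, -, rfl⟩ := combinatorial_nullstellensatz_exists_linearCombination
    (fun _ => ({1, -1} : Finset R)) (fun _ => insert_nonempty _ _) f (by simpa using hf)
  simp only [hroots]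
  rw [Ideal.span, ← Finsupp.range_linearCombination]
  exact LinearMap.mem_range_self _ h

section SignChar

variable (R : Type*) [CommRing R]

noncomputable def signChar : AddChar (ZMod 2) R :=
  AddChar.zmodChar 2 neg_one_sq

@[simp]
lemma signChar_zero : signChar R 0 = 1 :=
  AddChar.map_zero_eq_one _

@[simp]
lemma signChar_one : signChar R 1 = -1 := by
  rw [signChar, AddChar.zmodChar_apply]
  exact pow_one _

variable {R}

lemma signChar_sq (a : ZMod 2) : signChar R a ^ 2 = 1 := by
  rw [← AddChar.map_nsmul_eq_pow, CharTwo.two_nsmul, AddChar.map_zero_eq_one]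

lemma signChar_sum {ι : Type*} (s : Finset ι) (f : ι → ZMod 2) :
    signChar R (∑ i ∈ s, f i) = ∏ i ∈ s, signChar R (f i) :=
  map_prod (signChar R).toMonoidHom (fun i => Multiplicative.ofAdd (f i)) s

lemma exists_signChar_eq {r : R} (hr : r = 1 ∨ r = -1) : ∃ a, signChar R a = r := by
  rcases hr with rfl | rfl
  exacts [⟨0, signChar_zero R⟩, ⟨1, signChar_one R⟩]

lemma signChar_add_one_mul_signChar_add_one (p : ZMod 2 × ZMod 2) :
    (signChar R p.1 + 1) * (signChar R p.2 + 1) = if p = 0 then 4 else 0 := by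
  have h01 : ∀ a : ZMod 2, a = 0 ∨ a = 1 := by decide
  obtain ⟨a, b⟩ := p
  rcases h01 a with rfl | rfl <;> rcases h01 b with rfl | rfl <;> norm_num [Prod.ext_iff]

end SignChar

section FourFlowIdeal

variable {E : Type}

noncomputable def fourFlowPoint (φ : E → ZMod 2 × ZMod 2) : E ⊕ E → ℂ :=
  Sum.elim (fun e => signChar ℂ (φ e).1) (fun e => signChar ℂ (φ e).2)

lemma exists_fourFlowPoint_eq {x : E ⊕ E → ℂ} (hx : ∀ i, x i = 1 ∨ x i = -1) :
    ∃ φ, fourFlowPoint φ = x := by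
  choose a ha using fun i => exists_signChar_eq (hx i)
  exact ⟨fun e => (a (.inl e), a (.inr e)), funext fun i => by cases i <;> simp [fourFlowPoint, ha]⟩

lemma eval_fourFlowPoint_X_add_one_mul_X_add_one (φ : E → ZMod 2 × ZMod 2) (e : E) :
    eval (fourFlowPoint φ) ((X (Sum.inl e) + 1) * (X (Sum.inr e) + 1)) =
      if φ e = 0 then 4 else 0 := by
  simp only [map_mul, map_add, map_one, eval_X, fourFlowPoint, Sum.elim_inl, Sum.elim_inr]
  exact signChar_add_one_mul_signChar_add_one (φ e)

lemma eval_fourFlowPoint_eq_zero_of_mem {φ : E → ZMod 2 × ZMod 2} (hφ : ∀ e, φ e ≠ 0)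
    {p : MvPolynomial (E ⊕ E) ℂ} (hp : p ∈ fourFlowIdeal E) : eval (fourFlowPoint φ) p = 0 := by
  suffices fourFlowIdeal E ≤ RingHom.ker (eval (fourFlowPoint φ)) from this hp
  rw [fourFlowIdeal, Ideal.span_le]
  rintro _ ((⟨e, rfl⟩ | ⟨e, rfl⟩) | ⟨e, rfl⟩)
  · simp [fourFlowPoint, signChar_sq]
  · simp [fourFlowPoint, signChar_sq]
  · simp [eval_fourFlowPoint_X_add_one_mul_X_add_one, hφ e]

lemma span_X_sq_sub_one_le_fourFlowIdeal :
    Ideal.span (Set.range fun i => (X i : MvPolynomial (E ⊕ E) ℂ) ^ 2 - 1) ≤ fourFlowIdeal E := by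
  rw [Ideal.span_le]
  rintro _ ⟨e | e, rfl⟩
  · exact Ideal.subset_span (.inl (.inl ⟨e, rfl⟩))
  · exact Ideal.subset_span (.inl (.inr ⟨e, rfl⟩))

lemma mem_fourFlowIdeal_of_eval_eq_zero [Fintype E] {p : MvPolynomial (E ⊕ E) ℂ}
    (hp : ∀ φ, (∀ e, φ e ≠ 0) → eval (fourFlowPoint φ) p = 0) : p ∈ fourFlowIdeal E := by
  set g : MvPolynomial (E ⊕ E) ℂ :=
    ∏ e, (1 - C 4⁻¹ * ((X (Sum.inl e) + 1) * (X (Sum.inr e) + 1)))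
  have hg : Ideal.Quotient.mk (fourFlowIdeal E) g = 1 := by
    refine (map_prod _ _ _).trans (prod_eq_one fun e _ => ?_)
    rw [map_sub, map_one, Ideal.Quotient.eq_zero_iff_mem.mpr, sub_zero]
    exact Ideal.mul_mem_left _ _ (Ideal.subset_span (.inr ⟨e, rfl⟩))
  have hpg : p * g ∈ fourFlowIdeal E := by
    refine span_X_sq_sub_one_le_fourFlowIdeal (mem_span_X_sq_sub_one_of_eval_eq_zero ?_)
    intro x hx
    obtain ⟨φ, rfl⟩ := exists_fourFlowPoint_eq hx
    by_cases hφ : ∀ e, φ e ≠ 0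
    · rw [map_mul, hp φ hφ, zero_mul]
    · push Not at hφ
      obtain ⟨e, he⟩ := hφ
      rw [map_mul, map_prod, prod_eq_zero (mem_univ e), mul_zero]
      simp [eval_fourFlowPoint_X_add_one_mul_X_add_one, he]
  rw [← Ideal.Quotient.eq_zero_iff_mem] at hpg ⊢
  rwa [map_mul, hg, mul_one] at hpg

theorem mem_fourFlowIdeal_iff [Fintype E] (p : MvPolynomial (E ⊕ E) ℂ) :
    p ∈ fourFlowIdeal E ↔ ∀ φ, (∀ e, φ e ≠ 0) → eval (fourFlowPoint φ) p = 0 :=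
  ⟨fun hp _ hφ => eval_fourFlowPoint_eq_zero_of_mem hφ hp, mem_fourFlowIdeal_of_eval_eq_zero⟩

end FourFlowIdeal

lemma eval_fourFlowPoint_fourFlowPoly {V E : Type} [Fintype V] [Fintype E] [DecidableEq V]
    (ends : E → Sym2 V) (φ : E → ZMod 2 × ZMod 2) :
    eval (fourFlowPoint φ) (fourFlowPoly ends) =
      ∏ v, if ∑ e ∈ univ.filter (fun e => v ∈ ends e), φ e = 0 then 4 else 0 := by
  simp only [fourFlowPoly, map_prod, map_mul, map_add, map_one, eval_X, fourFlowPoint,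
    Sum.elim_inl, Sum.elim_inr, ← signChar_sum, ← Prod.fst_sum, ← Prod.snd_sum]
  exact prod_congr rfl fun v _ => signChar_add_one_mul_signChar_add_one _

theorem nowhere_zero_four_flow_iff_not_mem_ideal {V E : Type} [Fintype V] [Fintype E]
    [DecidableEq V] (ends : E → Sym2 V) :
    (∃ φ : E → ZMod 2 × ZMod 2, (∀ e, φ e ≠ 0) ∧
      ∀ v : V, ∑ e ∈ univ.filter (fun e => v ∈ ends e), φ e = 0) ↔
    fourFlowPoly ends ∉ fourFlowIdeal E := by
  rw [mem_fourFlowIdeal_iff]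
  push Not
  refine exists_congr fun φ => and_congr_right fun _ => ?_
  rw [eval_fourFlowPoint_fourFlowPoly, prod_ne_zero_iff]
  simp
end
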